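/- arXiv:2309.14815 — 6 statements merged into one kernel-verified Lean document; each statement's English description precedes it below -/
import Mathlib

section
/- Let (X, μ) be a measure space, let J and L be finite index types, and let (Y j)_{j∈J} and (Z ℓ)_{ℓ∈L} be orthonormal families in L²(μ; ℂ). Let v : X → ℝ be measurable with |v x| ≤ B almost everywhere, for some real B ≥ 0. Define E : Matrix J L ℂ by E j ℓ = ∫ conj(Y j x) · (Z ℓ x) · v x ∂μ(x). Then for every vector u : L → ℂ, the Euclidean norm of the matrix–vector product satisfies Σ_{j∈J} ‖(E.mulVec u) j‖² ≤ B² · Σ_{ℓ∈L} ‖u ℓ‖². -/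
open MeasureTheory ComplexConjugate
open scoped ENNReal

/-!
Writing `g = ∑ ℓ, u ℓ • Z ℓ`, the vector `E u` is `(⟪Y j, v • g⟫)_j`, where `v • ·` is
multiplication by `v` on `L²`, an operator of norm at most `B`. Bessel's inequality for `(Y j)`,
the operator bound and Parseval's identity for `(Z ℓ)` give
`∑ j, |(E u) j|² ≤ ‖v • g‖² ≤ B² ‖g‖² = B² ∑ ℓ, |u ℓ|²`.
-/

section Orthonormal

variable {𝕜 H : Type*} [RCLike 𝕜] [NormedAddCommGroup H] [InnerProductSpace 𝕜 H]

theorem Orthonormal.norm_sum_smul_sq {ι : Type*} [Fintype ι] {Z : ι → H}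
    (hZ : Orthonormal 𝕜 Z) (u : ι → 𝕜) :
    ‖∑ ℓ, u ℓ • Z ℓ‖ ^ 2 = ∑ ℓ, ‖u ℓ‖ ^ 2 := by
  have h := hZ.inner_sum u u Finset.univ
  simp only [inner_self_eq_norm_sq_to_K, RCLike.conj_mul] at h
  exact_mod_cast h

theorem Orthonormal.sum_norm_mulVec_inner_sq_le {J L : Type*} [Fintype J] [Fintype L]
    {Y : J → H} {Z : L → H} (hY : Orthonormal 𝕜 Y) (hZ : Orthonormal 𝕜 Z)
    (T : H →L[𝕜] H) (u : L → 𝕜) :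
    ∑ j, ‖(Matrix.of fun j ℓ ↦ inner 𝕜 (Y j) (T (Z ℓ))).mulVec u j‖ ^ 2 ≤
      ‖T‖ ^ 2 * ∑ ℓ, ‖u ℓ‖ ^ 2 := by
  set g := ∑ ℓ, u ℓ • Z ℓ
  have hmulVec : ∀ j, (Matrix.of fun j ℓ ↦ inner 𝕜 (Y j) (T (Z ℓ))).mulVec u j =
      inner 𝕜 (Y j) (T g) := by
    intro j
    simp only [g, Matrix.mulVec, dotProduct, Matrix.of_apply, map_sum, map_smul, inner_sum,
      inner_smul_right, mul_comm]
  calc ∑ j, ‖(Matrix.of fun j ℓ ↦ inner 𝕜 (Y j) (T (Z ℓ))).mulVec u j‖ ^ 2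
      = ∑ j, ‖inner 𝕜 (Y j) (T g)‖ ^ 2 := by simp only [hmulVec]
    _ ≤ ‖T g‖ ^ 2 := hY.sum_inner_products_le _
    _ ≤ (‖T‖ * ‖g‖) ^ 2 := by gcongr; exact T.le_opNorm g
    _ = ‖T‖ ^ 2 * ∑ ℓ, ‖u ℓ‖ ^ 2 := by rw [mul_pow, hZ.norm_sum_smul_sq]

end Orthonormal

namespace MeasureTheory.Lp

variable {X : Type*} [MeasurableSpace X] {μ : Measure X}

theorem norm_toLp_top_le {E : Type*} [NormedAddCommGroup E] {f : X → E} (hf : MemLp f ∞ μ)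
    {C : ℝ} (hC : 0 ≤ C) (hfC : ∀ᵐ x ∂μ, ‖f x‖ ≤ C) : ‖hf.toLp f‖ ≤ C := by
  rw [norm_toLp, eLpNorm_exponent_top]
  exact ENNReal.toReal_le_of_le_ofReal hC (eLpNormEssSup_le_of_ae_bound hfC)

section MulOperator

variable {𝕜 : Type*} (p : ENNReal) [Fact (1 ≤ p)]

noncomputable def mulOperator [NontriviallyNormedField 𝕜] (V : Lp 𝕜 ∞ μ) :
    Lp 𝕜 p μ →L[𝕜] Lp 𝕜 p μ :=
  (ContinuousLinearMap.mul 𝕜 𝕜).holderL μ ∞ p p V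

theorem coeFn_mulOperator [NontriviallyNormedField 𝕜] (V : Lp 𝕜 ∞ μ) (g : Lp 𝕜 p μ) :
    mulOperator p V g =ᵐ[μ] fun x ↦ V x * g x :=
  (ContinuousLinearMap.mul 𝕜 𝕜).coeFn_holder V g

theorem norm_mulOperator_le [NontriviallyNormedField 𝕜] (V : Lp 𝕜 ∞ μ) :
    ‖mulOperator p V‖ ≤ ‖V‖ :=
  (ContinuousLinearMap.le_of_opNorm_le _ (ContinuousLinearMap.norm_holderL_le _) V).trans
    (mul_le_of_le_one_left (norm_nonneg V) (ContinuousLinearMap.opNorm_mul_le 𝕜 𝕜))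

theorem inner_mulOperator [RCLike 𝕜] (V : Lp 𝕜 ∞ μ) (f g : Lp 𝕜 2 μ) :
    inner 𝕜 f (mulOperator 2 V g) = ∫ x, conj (f x) * g x * V x ∂μ := by
  rw [L2.inner_def]
  refine integral_congr_ae ?_
  filter_upwards [coeFn_mulOperator 2 V g] with x hx
  rw [hx, RCLike.inner_apply']
  ring

end MulOperator

end MeasureTheory.Lp

/-- Analytic core of Theorem 3.2: for orthonormal families `(Y j)` and `(Z ℓ)` in
`L²(μ; ℂ)` and a measurable mask `v` with `|v| ≤ B` a.e., the matrix
`E j ℓ = ∫ conj(Y j x) * Z ℓ x * v x dμ` satisfies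
`Σ_j ‖(E.mulVec u) j‖² ≤ B² Σ_ℓ ‖u ℓ‖²` for every vector `u`. -/
theorem stmt_2 {X : Type*} [MeasurableSpace X] {μ : Measure X}
    {J L : Type*} [Fintype J] [Fintype L]
    (Y : J → Lp ℂ 2 μ) (Z : L → Lp ℂ 2 μ)
    (hY : Orthonormal ℂ Y) (hZ : Orthonormal ℂ Z)
    (v : X → ℝ) (hv : Measurable v) (B : ℝ) (hB : 0 ≤ B)
    (hvB : ∀ᵐ x ∂μ, |v x| ≤ B)
    (E : Matrix J L ℂ)
    (hE : ∀ j ℓ, E j ℓ = ∫ x, conj (Y j x) * (Z ℓ x) * (v x : ℂ) ∂μ)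
    (u : L → ℂ) :
    ∑ j, ‖E.mulVec u j‖ ^ 2 ≤ B ^ 2 * ∑ ℓ, ‖u ℓ‖ ^ 2 := by
  have hvB' : ∀ᵐ x ∂μ, ‖(v x : ℂ)‖ ≤ B := by simpa only [Complex.norm_real, Real.norm_eq_abs] using hvB
  have hV := memLp_top_of_bound (by fun_prop : Measurable fun x ↦ (v x : ℂ)).aestronglyMeasurable B hvB'
  set T := Lp.mulOperator 2 (hV.toLp _)
  have hET : E = Matrix.of fun j ℓ ↦ inner ℂ (Y j) (T (Z ℓ)) := by
    ext j ℓ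
    rw [hE, Matrix.of_apply, Lp.inner_mulOperator]
    refine integral_congr_ae ?_
    filter_upwards [hV.coeFn_toLp] with x hx
    rw [hx]
  have hTB : ‖T‖ ≤ B := (Lp.norm_mulOperator_le 2 _).trans (Lp.norm_toLp_top_le hV hB hvB')
  calc ∑ j, ‖E.mulVec u j‖ ^ 2 ≤ ‖T‖ ^ 2 * ∑ ℓ, ‖u ℓ‖ ^ 2 := by
        rw [hET]; exact hY.sum_norm_mulVec_inner_sq_le hZ T u
    _ ≤ B ^ 2 * ∑ ℓ, ‖u ℓ‖ ^ 2 := by gcongr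
end

section
/- Let (X, μ) be a measure space, let L be a finite index type, let (Y ℓ)_{ℓ∈L} be an orthonormal family in L²(μ; ℂ), and let v : X → ℝ be measurable with α ≤ v x ≤ β almost everywhere, for reals α ≤ β. Define E : Matrix L L ℂ by E j ℓ = ∫ conj(Y j x) · (Y ℓ x) · v x ∂μ(x). Then for every λ ∈ ℂ and every nonzero q : L → ℂ with E.mulVec q = λ • q, the eigenvalue λ is real and satisfies α ≤ λ ≤ β. -/
/-!
Put `g = ∑ ℓ, q ℓ • Y ℓ`. Expanding `|g|² v` shows that the Hermitian form of `E` at `q` is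
`∫ |g|² v`, and the same computation with `v = 1` together with orthonormality gives
Parseval, `∫ |g|² = ∑ |q ℓ|²`. Testing `E q = λ q` against `q` then exhibits `λ` as the real
Rayleigh quotient `∫ |g|² v / ∫ |g|²`, which lies between the essential bounds of `v`.
-/

open MeasureTheory ComplexConjugate Matrix
open scoped ComplexOrder

section

variable {X : Type*} [MeasurableSpace X] {μ : Measure X} {L : Type*}

noncomputable def weightedGram (f : L → X → ℂ) (v : X → ℝ) (μ : Measure X) : Matrix L L ℂ :=
  of fun j ℓ => ∫ x, conj (f j x) * f ℓ x * (v x : ℂ) ∂μ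

lemma integrable_conj_mul_mul_ofReal {f g : X → ℂ} {v : X → ℝ} {C : ℝ}
    (hf : MemLp f 2 μ) (hg : MemLp g 2 μ) (hv : AEStronglyMeasurable v μ)
    (hvC : ∀ᵐ x ∂μ, |v x| ≤ C) :
    Integrable (fun x => conj (f x) * g x * (v x : ℂ)) μ := by
  have hfg : Integrable (fun x => conj (f x) * g x) μ := hf.star.integrable_mul hg
  refine (hfg.bdd_mul (c := C) (Complex.continuous_ofReal.comp_aestronglyMeasurable hv)
    ?_).congr (ae_of_all μ fun x => mul_comm _ _)
  filter_upwards [hvC] with x hx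
  rwa [Complex.norm_real, Real.norm_eq_abs]

lemma star_dotProduct_weightedGram_mulVec [Fintype L] {f : L → X → ℂ} {v : X → ℝ}
    (hint : ∀ j ℓ, Integrable (fun x => conj (f j x) * f ℓ x * (v x : ℂ)) μ) (q : L → ℂ) :
    star q ⬝ᵥ (weightedGram f v μ *ᵥ q) = ((∫ x, ‖∑ ℓ, q ℓ * f ℓ x‖ ^ 2 * v x ∂μ : ℝ) : ℂ) := by
  have hexpand : ∀ x, ((‖∑ ℓ, q ℓ * f ℓ x‖ ^ 2 * v x : ℝ) : ℂ)
      = ∑ j, ∑ ℓ, conj (q j) * q ℓ * (conj (f j x) * f ℓ x * (v x : ℂ)) := fun x => by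
    rw [Complex.ofReal_mul, Complex.ofReal_pow, ← Complex.conj_mul', map_sum, Finset.sum_mul_sum,
      Finset.sum_mul]
    refine Finset.sum_congr rfl fun j _ => ?_
    rw [Finset.sum_mul]
    refine Finset.sum_congr rfl fun ℓ _ => ?_
    simp only [map_mul]
    ring
  rw [← integral_complex_ofReal]
  simp_rw [hexpand]
  rw [integral_finsetSum _ fun j _ => integrable_finsetSum _ fun ℓ _ => (hint j ℓ).const_mul _]
  refine Finset.sum_congr rfl fun j _ => ?_
  rw [integral_finsetSum _ fun ℓ _ => (hint j ℓ).const_mul _, mulVec, dotProduct,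
    Pi.star_apply, Finset.mul_sum]
  refine Finset.sum_congr rfl fun ℓ _ => ?_
  rw [integral_const_mul, weightedGram, of_apply]
  simp only [RCLike.star_def]
  ring

lemma weightedGram_one_of_orthonormal [DecidableEq L] {Y : L → Lp ℂ 2 μ} (hY : Orthonormal ℂ Y) :
    weightedGram (fun ℓ => Y ℓ) 1 μ = 1 := by
  ext j ℓ
  rw [weightedGram, of_apply, one_apply, ← orthonormal_iff_ite.mp hY j ℓ, L2.inner_def]
  simp [RCLike.inner_apply, mul_comm]

lemma integral_mul_mem_Icc {h v : X → ℝ} {α β : ℝ} (hh : Integrable h μ) (hh0 : ∀ᵐ x ∂μ, 0 ≤ h x)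
    (hv : AEStronglyMeasurable v μ) (hbound : ∀ᵐ x ∂μ, α ≤ v x ∧ v x ≤ β) :
    ∫ x, h x * v x ∂μ ∈ Set.Icc (α * ∫ x, h x ∂μ) (β * ∫ x, h x ∂μ) := by
  have hhv : Integrable (fun x => h x * v x) μ := by
    refine (hh.bdd_mul (c := max |α| |β|) hv ?_).congr (ae_of_all μ fun x => mul_comm _ _)
    filter_upwards [hbound] with x hx
    exact abs_le_max_abs_abs hx.1 hx.2
  rw [← integral_const_mul, ← integral_const_mul]
  constructor
  · refine integral_mono_ae (hh.const_mul α) hhv ?_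
    filter_upwards [hbound, hh0] with x hx hx0
    linarith [mul_le_mul_of_nonneg_left hx.1 hx0]
  · refine integral_mono_ae hhv (hh.const_mul β) ?_
    filter_upwards [hbound, hh0] with x hx hx0
    linarith [mul_le_mul_of_nonneg_left hx.2 hx0]

end

theorem stmt_5_general {X : Type*} [MeasurableSpace X] {μ : Measure X}
    {L : Type*} [Fintype L]
    (Y : L → Lp ℂ 2 μ) (hY : Orthonormal ℂ Y)
    (v : X → ℝ) (hv : Measurable v) (α β : ℝ)
    (hbound : ∀ᵐ x ∂μ, α ≤ v x ∧ v x ≤ β)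
    (E : Matrix L L ℂ)
    (hE : ∀ j ℓ, E j ℓ = ∫ x, conj (Y j x) * (Y ℓ x) * (v x : ℂ) ∂μ)
    (lam : ℂ) (q : L → ℂ) (hq : q ≠ 0)
    (heig : E.mulVec q = lam • q) :
    ∃ r : ℝ, lam = (r : ℂ) ∧ α ≤ r ∧ r ≤ β := by
  classical
  set g : X → ℂ := fun x => ∑ ℓ, q ℓ * Y ℓ x
  set N : ℝ := ∫ x, ‖g x‖ ^ 2 ∂μ
  set R : ℝ := ∫ x, ‖g x‖ ^ 2 * v x ∂μ
  have hE' : E = weightedGram (fun ℓ => Y ℓ) v μ := by ext j ℓ; exact hE j ℓ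
  have hR : star q ⬝ᵥ (E *ᵥ q) = R := by
    rw [hE']
    exact star_dotProduct_weightedGram_mulVec (fun j ℓ => integrable_conj_mul_mul_ofReal
      (Lp.memLp _) (Lp.memLp _) hv.aestronglyMeasurable
      (hbound.mono fun x hx => abs_le_max_abs_abs hx.1 hx.2)) q
  have hN : star q ⬝ᵥ q = N := by
    have hN1 := star_dotProduct_weightedGram_mulVec (v := 1) (fun j ℓ =>
      integrable_conj_mul_mul_ofReal (C := 1) (Lp.memLp (Y j)) (Lp.memLp (Y ℓ))
        aestronglyMeasurable_const (ae_of_all μ fun x => by simp)) q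
    simpa [weightedGram_one_of_orthonormal hY] using hN1
  have hNpos : 0 < N := by
    have hN0 : N ≠ 0 := by exact_mod_cast hN ▸ dotProduct_star_self_eq_zero.not.mpr hq
    exact (integral_nonneg fun x => by positivity).lt_of_ne' hN0
  have hlam : lam * N = R := by
    rw [← hR, ← hN, heig, dotProduct_smul, smul_eq_mul]
  obtain ⟨hαR, hRβ⟩ := integral_mul_mem_Icc (μ := μ) (h := fun x => ‖g x‖ ^ 2)
    ((memLp_finsetSum _ fun ℓ _ => (Lp.memLp (Y ℓ)).const_mul (q ℓ)).integrable_norm_pow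
      two_ne_zero)
    (ae_of_all μ fun x => by positivity) hv.aestronglyMeasurable hbound
  refine ⟨R / N, ?_, (le_div_iff₀ hNpos).mpr ?_, (div_le_iff₀ hNpos).mpr ?_⟩
  · rw [Complex.ofReal_div, eq_div_iff (by exact_mod_cast hNpos.ne'), hlam]
  · linarith
  · linarith

/-- Theorem 3.3 (non-strict form): for an orthonormal family `(Y ℓ)` in `L²(μ; ℂ)` and
a measurable mask `v` with `α ≤ v ≤ β` a.e., every eigenvalue `λ` of the matrix
`E j ℓ = ∫ conj(Y j x) * Y ℓ x * v x dμ` is real and satisfies `α ≤ λ ≤ β`. -/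
theorem stmt_5 {X : Type*} [MeasurableSpace X] {μ : Measure X}
    {L : Type*} [Fintype L]
    (Y : L → Lp ℂ 2 μ) (hY : Orthonormal ℂ Y)
    (v : X → ℝ) (hv : Measurable v) (α β : ℝ) (hαβ : α ≤ β)
    (hbound : ∀ᵐ x ∂μ, α ≤ v x ∧ v x ≤ β)
    (E : Matrix L L ℂ)
    (hE : ∀ j ℓ, E j ℓ = ∫ x, conj (Y j x) * (Y ℓ x) * (v x : ℂ) ∂μ)
    (lam : ℂ) (q : L → ℂ) (hq : q ≠ 0)
    (heig : E.mulVec q = lam • q) :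
    ∃ r : ℝ, lam = (r : ℂ) ∧ α ≤ r ∧ r ≤ β :=
  stmt_5_general Y hY v hv α β hbound E hE lam q hq heig
end

section
/- Let J and L be finite index types. Let E : Matrix J L ℂ, let C and N be positive semidefinite Hermitian matrices in Matrix L L ℂ, and let Λ be a positive semidefinite Hermitian matrix in Matrix L L ℂ. For Q : Matrix L J ℂ define the real number f(Q) := Re (trace (Λ * (C − Q*E*C − (Q*E*C)ᴴ + Q*E*(C+N)*Eᴴ*Qᴴ))). If Q̂ : Matrix L J ℂ satisfies Q̂ * E * (C + N) * Eᴴ = C * Eᴴ, then f(Q̂) ≤ f(Q) for every Q : Matrix L J ℂ. -/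
open Matrix
open scoped ComplexOrder

/-! Completing the square: with `M = E (C+N) Eᴴ` and `Q̂ M = (E C)ᴴ`, the error covariance of `Q`
exceeds that of `Q̂` by `(Q − Q̂) M (Q − Q̂)ᴴ`, which is positive semidefinite, and the trace of a
product of two positive semidefinite matrices has nonnegative real part. -/

namespace Matrix

section CompletingTheSquare

variable {m n R : Type*} [Fintype n] [Ring R] [StarRing R]

theorem mul_mul_conjTranspose_sub_eq_sub {M : Matrix n n R} {B : Matrix n m R}
    {Q Q₀ : Matrix m n R} (hM : M.IsHermitian) (hQ₀ : Q₀ * M = Bᴴ) :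
    Q * M * Qᴴ - Q * B - (Q * B)ᴴ = (Q - Q₀) * M * (Q - Q₀)ᴴ - Q₀ * M * Q₀ᴴ := by
  have hB : B = M * Q₀ᴴ := by
    rw [← conjTranspose_conjTranspose B, ← hQ₀, conjTranspose_mul, hM.eq]
  simp only [hB, conjTranspose_mul, conjTranspose_sub, hM.eq, conjTranspose_conjTranspose,
    Matrix.sub_mul, Matrix.mul_sub, Matrix.mul_assoc]
  abel

end CompletingTheSquare

section ErrorCovariance

variable {J L R : Type*} [Fintype J] [Fintype L] [Ring R] [StarRing R]

/-- The covariance `⟨(a − QE(a+ε))(a − QE(a+ε))ᴴ⟩` of the estimation error, for independent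
`a`, `ε` with `⟨aaᴴ⟩ = C` and `⟨εεᴴ⟩ = N`. -/
def errorCovariance (E : Matrix J L R) (C N : Matrix L L R) (Q : Matrix L J R) : Matrix L L R :=
  C - Q * E * C - (Q * E * C)ᴴ + Q * E * (C + N) * Eᴴ * Qᴴ

theorem errorCovariance_eq_add {E : Matrix J L R} {C N : Matrix L L R} {Q₀ : Matrix L J R}
    (hC : C.IsHermitian) (hCN : (C + N).IsHermitian) (hQ₀ : Q₀ * E * (C + N) * Eᴴ = C * Eᴴ)
    (Q : Matrix L J R) :
    errorCovariance E C N Q =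
      errorCovariance E C N Q₀ + (Q - Q₀) * (E * (C + N) * Eᴴ) * (Q - Q₀)ᴴ := by
  set M := E * (C + N) * Eᴴ
  have hM : M.IsHermitian := isHermitian_mul_mul_conjTranspose E hCN
  have hQ₀M : Q₀ * M = (E * C)ᴴ := by
    rw [conjTranspose_mul, hC.eq, ← hQ₀]
    simp only [M, Matrix.mul_assoc]
  have expand : ∀ Q, errorCovariance E C N Q = C + (Q * M * Qᴴ - Q * (E * C) - (Q * (E * C))ᴴ) :=
    fun Q => by
      simp only [errorCovariance, M, Matrix.mul_assoc]
      abel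
  rw [expand, expand, mul_mul_conjTranspose_sub_eq_sub hM hQ₀M,
    mul_mul_conjTranspose_sub_eq_sub (Q := Q₀) hM hQ₀M, sub_self, Matrix.zero_mul, Matrix.zero_mul]
  abel

end ErrorCovariance

open scoped MatrixOrder in
theorem PosSemidef.trace_mul_nonneg {n 𝕜 : Type*} [Fintype n] [RCLike 𝕜] {A B : Matrix n n 𝕜}
    (hA : A.PosSemidef) (hB : B.PosSemidef) : 0 ≤ (A * B).trace := by
  classical
  obtain ⟨D, rfl⟩ := CStarAlgebra.nonneg_iff_eq_star_mul_self.mp hB.nonneg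
  rw [star_eq_conjTranspose, ← mul_assoc, trace_mul_comm]
  simpa only [mul_assoc] using (hA.mul_mul_conjTranspose_same D).trace_nonneg

end Matrix

/-- Theorem 4.1 (sufficiency): with positive semidefinite Hermitian covariances `C`, `N`
and positive semidefinite Hermitian `Λ`, the expected squared `Λ`-norm error
`f(Q) = Re tr[Λ(C − QEC − (QEC)ᴴ + QE(C+N)EᴴQᴴ)]` is minimized by any `Q̂` with
`Q̂ E (C+N) Eᴴ = C Eᴴ`. -/
theorem stmt_7 {J L : Type*} [Fintype J] [Fintype L]
    (E : Matrix J L ℂ) (C N Λ : Matrix L L ℂ)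
    (hC : C.PosSemidef) (hN : N.PosSemidef) (hΛ : Λ.PosSemidef)
    (Qhat : Matrix L J ℂ)
    (hQhat : Qhat * E * (C + N) * Eᴴ = C * Eᴴ) :
    ∀ Q : Matrix L J ℂ,
      (Matrix.trace (Λ * (C - Qhat * E * C - (Qhat * E * C)ᴴ
          + Qhat * E * (C + N) * Eᴴ * Qhatᴴ))).re ≤
      (Matrix.trace (Λ * (C - Q * E * C - (Q * E * C)ᴴ
          + Q * E * (C + N) * Eᴴ * Qᴴ))).re := by
  intro Q
  have hCN := hC.add hN
  change (Λ * errorCovariance E C N Qhat).trace.re ≤ (Λ * errorCovariance E C N Q).trace.re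
  rw [errorCovariance_eq_add hC.isHermitian hCN.isHermitian hQhat Q, Matrix.mul_add, trace_add,
    Complex.add_re, le_add_iff_nonneg_right]
  exact (Complex.nonneg_iff.mp <|
    hΛ.trace_mul_nonneg ((hCN.mul_mul_conjTranspose_same E).mul_mul_conjTranspose_same _)).1
end

section
/- Let J and L be finite index types. Let E : Matrix J L ℂ, let C and N be positive semidefinite Hermitian matrices in Matrix L L ℂ, and let Λ be a positive definite Hermitian matrix in Matrix L L ℂ. For Q : Matrix L J ℂ define f(Q) := Re (trace (Λ * (C − Q*E*C − (Q*E*C)ᴴ + Q*E*(C+N)*Eᴴ*Qᴴ))). If Q̂ : Matrix L J ℂ satisfies f(Q̂) ≤ f(Q) for every Q : Matrix L J ℂ, then Q̂ * E * (C + N) * Eᴴ = C * Eᴴ. -/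
open Matrix
open scoped ComplexOrder

/-- Theorem 4.1 (necessity): with positive semidefinite Hermitian covariances `C`, `N`
and positive definite Hermitian `Λ`, any minimizer `Q̂` of the expected squared
`Λ`-norm error `f(Q) = Re tr[Λ(C − QEC − (QEC)ᴴ + QE(C+N)EᴴQᴴ)]` satisfies
`Q̂ E (C+N) Eᴴ = C Eᴴ`. -/
theorem stmt_8 {J L : Type*} [Fintype J] [Fintype L]
    (E : Matrix J L ℂ) (C N Λ : Matrix L L ℂ)
    (hC : C.PosSemidef) (hN : N.PosSemidef) (hΛ : Λ.PosDef)
    (Qhat : Matrix L J ℂ)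
    (hmin : ∀ Q : Matrix L J ℂ,
      (Matrix.trace (Λ * (C - Qhat * E * C - (Qhat * E * C)ᴴ
          + Qhat * E * (C + N) * Eᴴ * Qhatᴴ))).re ≤
      (Matrix.trace (Λ * (C - Q * E * C - (Q * E * C)ᴴ
          + Q * E * (C + N) * Eᴴ * Qᴴ))).re) :
    Qhat * E * (C + N) * Eᴴ = C * Eᴴ := by
  classical
  have hCh : Cᴴ = C := hC.1
  have hNh : Nᴴ = N := hN.1
  have hΛh : Λᴴ = Λ := hΛ.1
  -- the matrix whose vanishing is equivalent to the conclusion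
  set M : Matrix J L ℂ := E * (C + N) * Eᴴ * Qhatᴴ - E * C with hM
  set R : Matrix L J ℂ := -(Λ⁻¹ * Mᴴ) with hR
  have hdet : IsUnit Λ.det := (Matrix.isUnit_iff_isUnit_det Λ).1 hΛ.isUnit
  have hΛinv : Λ * Λ⁻¹ = 1 := Matrix.mul_nonsing_inv Λ hdet
  have hinvΛ : Λ⁻¹ * Λ = 1 := Matrix.nonsing_inv_mul Λ hdet
  have hΛinvH : (Λ⁻¹)ᴴ = Λ⁻¹ := by
    rw [Matrix.conjTranspose_nonsing_inv, hΛh]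
  -- key expansion identity
  have key : ∀ t : ℝ,
      (Λ * (C - (Qhat + (t:ℂ) • R) * E * C - ((Qhat + (t:ℂ) • R) * E * C)ᴴ
            + (Qhat + (t:ℂ) • R) * E * (C + N) * Eᴴ * (Qhat + (t:ℂ) • R)ᴴ))
      = (Λ * (C - Qhat * E * C - (Qhat * E * C)ᴴ
            + Qhat * E * (C + N) * Eᴴ * Qhatᴴ))
        + (t:ℂ) • (Λ * (R * M) + Λ * (R * M)ᴴ)
        + ((t:ℂ) * (t:ℂ)) • (Λ * (R * (E * (C + N) * Eᴴ) * Rᴴ)) := by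
    intro t
    rw [hM]
    simp only [Matrix.add_mul, Matrix.mul_add, Matrix.mul_sub, Matrix.sub_mul,
      Matrix.smul_mul, Matrix.mul_smul, conjTranspose_add, conjTranspose_smul,
      conjTranspose_mul, conjTranspose_sub, conjTranspose_conjTranspose, hCh, hNh, hΛh,
      Complex.star_def, Complex.conj_ofReal, smul_add, smul_sub, smul_smul,
      Matrix.mul_assoc]
    abel
  -- value of the linear coefficient
  have hlin : Matrix.trace (Λ * (R * M) + Λ * (R * M)ᴴ)
      = -(2 * Matrix.trace (Mᴴ * M)) := by
    have h1 : Λ * (R * M) = -(Mᴴ * M) := by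
      rw [hR]
      simp only [Matrix.neg_mul, Matrix.mul_neg, ← Matrix.mul_assoc, hΛinv, Matrix.one_mul]
    have h2 : Matrix.trace (Λ * (R * M)ᴴ) = -(Matrix.trace (Mᴴ * M)) := by
      have hRH : Rᴴ = -(M * Λ⁻¹) := by
        rw [hR, conjTranspose_neg, conjTranspose_mul, conjTranspose_conjTranspose, hΛinvH]
      rw [conjTranspose_mul, hRH]
      simp only [Matrix.mul_neg, trace_neg]
      rw [Matrix.trace_mul_comm]
      simp only [Matrix.mul_assoc, hinvΛ, Matrix.mul_one]
    rw [trace_add, h1, trace_neg, h2]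
    ring
  -- trace (Mᴴ * M) as a sum of squared norms
  have htr : Matrix.trace (Mᴴ * M) = ((∑ j, ∑ i, Complex.normSq (M i j) : ℝ) : ℂ) := by
    rw [Matrix.trace]
    push_cast
    refine Finset.sum_congr rfl fun j _ => ?_
    rw [Matrix.diag_apply, Matrix.mul_apply]
    refine Finset.sum_congr rfl fun i _ => ?_
    rw [Matrix.conjTranspose_apply]
    simp [Complex.star_def, Complex.mul_conj, mul_comm]
  set s : ℝ := ∑ j, ∑ i, Complex.normSq (M i j) with hs
  have hs_nonneg : 0 ≤ s :=
    Finset.sum_nonneg fun j _ => Finset.sum_nonneg fun i _ => Complex.normSq_nonneg _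
  -- the quadratic coefficient
  set q : ℝ := (Matrix.trace (Λ * (R * (E * (C + N) * Eᴴ) * Rᴴ))).re with hq
  -- the basic inequality from minimality
  have hineq : ∀ t : ℝ, 0 ≤ t * (-(2 * s)) + t * t * q := by
    intro t
    have h := hmin (Qhat + (t:ℂ) • R)
    rw [key t] at h
    rw [trace_add, trace_add, trace_smul, trace_smul, hlin, htr] at h
    have h' : 0 ≤ ((t:ℂ) • (-(2 * ((s:ℝ):ℂ)))
        + ((t:ℂ) * (t:ℂ)) • Matrix.trace (Λ * (R * (E * (C + N) * Eᴴ) * Rᴴ))).re := by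
      have := h
      simp only [Complex.add_re] at this ⊢
      linarith
    simpa [Complex.add_re, Complex.smul_re, Complex.neg_re, Complex.mul_re,
      Complex.ofReal_re, Complex.ofReal_im, hq, smul_eq_mul] using h'
  -- conclude s = 0
  have hs0 : s = 0 := by
    by_contra hne
    have hspos : 0 < s := lt_of_le_of_ne hs_nonneg (Ne.symm hne)
    set t : ℝ := s / (|q| + 1) with ht
    have hden : (0:ℝ) < |q| + 1 := by positivity
    have htpos : 0 < t := div_pos hspos hden
    have htq : t * (|q| + 1) = s := div_mul_cancel₀ _ hden.ne'
    have h := hineq t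
    have hqabs : q ≤ |q| := le_abs_self q
    nlinarith [mul_pos htpos hspos, mul_pos htpos htpos,
      mul_le_mul_of_nonneg_left hqabs (le_of_lt (mul_pos htpos htpos))]
  -- s = 0 implies M = 0
  have hM0 : M = 0 := by
    ext i j
    have hsum : (∑ j, ∑ i, Complex.normSq (M i j)) = 0 := by rw [← hs]; exact hs0
    have h2 := (Finset.sum_eq_zero_iff_of_nonneg
      (fun j' (_ : j' ∈ Finset.univ) =>
        Finset.sum_nonneg fun i _ => Complex.normSq_nonneg (M i j'))).1 hsum
    have hij := (Finset.sum_eq_zero_iff_of_nonneg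
      (fun i' (_ : i' ∈ Finset.univ) => Complex.normSq_nonneg (M i' j))).1
      (h2 j (Finset.mem_univ j)) i (Finset.mem_univ i)
    simpa using Complex.normSq_eq_zero.1 hij
  -- translate M = 0 into the conclusion
  have hMeq : E * (C + N) * Eᴴ * Qhatᴴ = E * C := by
    have := sub_eq_zero.1 (hM ▸ hM0)
    exact this
  have := congrArg Matrix.conjTranspose hMeq
  simpa [conjTranspose_mul, conjTranspose_add, hCh, hNh, Matrix.mul_assoc] using this
end

section
/- Let L₀ ∈ ℕ and let I := {(ℓ, m) ∈ ℤ × ℤ : 0 ≤ ℓ ≤ L₀ and |m| ≤ ℓ}, a finite index type. Let M : Matrix I I ℂ be an invertible matrix satisfying M (ℓ,−m) (ℓ',m') = (−1)^{m−m'} · conj(M (ℓ,m) (ℓ',−m')) for all (ℓ,m), (ℓ',m') ∈ I, and let b : I → ℂ satisfy b (ℓ,m) = (−1)^m · conj(b (ℓ,−m)) for all (ℓ,m) ∈ I. Then the unique solution α : I → ℂ of M.mulVec α = b satisfies α (ℓ,m) = (−1)^m · conj(α (ℓ,−m)) for all (ℓ,m) ∈ I. -/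
open Matrix ComplexConjugate

/-- Core of the Proposition at the end of Section 4: if the invertible matrix `M` on the
index set `I = {(ℓ,m) : 0 ≤ ℓ ≤ L₀, |m| ≤ ℓ}` satisfies
`M (ℓ,−m) (ℓ',m') = (−1)^{m−m'} conj (M (ℓ,m) (ℓ',−m'))` and the vector `b` satisfies
`b (ℓ,m) = (−1)^m conj (b (ℓ,−m))`, then the unique solution `α` of `M α = b` satisfies
`α (ℓ,m) = (−1)^m conj (α (ℓ,−m))`. -/
theorem stmt_13 (L₀ : ℕ)
    [Fintype {p : ℤ × ℤ // 0 ≤ p.1 ∧ p.1 ≤ (L₀ : ℤ) ∧ |p.2| ≤ p.1}]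
    (M : Matrix {p : ℤ × ℤ // 0 ≤ p.1 ∧ p.1 ≤ (L₀ : ℤ) ∧ |p.2| ≤ p.1}
                {p : ℤ × ℤ // 0 ≤ p.1 ∧ p.1 ≤ (L₀ : ℤ) ∧ |p.2| ≤ p.1} ℂ)
    (hMunit : IsUnit M)
    (hMsym : ∀ p p' q q', p'.1 = (p.1.1, -p.1.2) → q'.1 = (q.1.1, -q.1.2) →
      M p' q = (-1 : ℂ) ^ (p.1.2 - q.1.2) * conj (M p q'))
    (b : {p : ℤ × ℤ // 0 ≤ p.1 ∧ p.1 ≤ (L₀ : ℤ) ∧ |p.2| ≤ p.1} → ℂ)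
    (hb : ∀ p p', p'.1 = (p.1.1, -p.1.2) → b p = (-1 : ℂ) ^ (p.1.2) * conj (b p'))
    (α : {p : ℤ × ℤ // 0 ≤ p.1 ∧ p.1 ≤ (L₀ : ℤ) ∧ |p.2| ≤ p.1} → ℂ)
    (hα : M.mulVec α = b) :
    ∀ p p', p'.1 = (p.1.1, -p.1.2) → α p = (-1 : ℂ) ^ (p.1.2) * conj (α p') := by
  classical
  let σ : {p : ℤ × ℤ // 0 ≤ p.1 ∧ p.1 ≤ (L₀ : ℤ) ∧ |p.2| ≤ p.1} →
      {p : ℤ × ℤ // 0 ≤ p.1 ∧ p.1 ≤ (L₀ : ℤ) ∧ |p.2| ≤ p.1} :=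
    fun p => ⟨(p.1.1, -p.1.2), p.2.1, p.2.2.1, by simpa using p.2.2.2⟩
  have hσσ : ∀ p, σ (σ p) = p := fun p => Subtype.ext (by simp [σ])
  have hσbij : Function.Bijective σ :=
    Function.bijective_iff_has_inverse.mpr ⟨σ, hσσ, hσσ⟩
  let β : {p : ℤ × ℤ // 0 ≤ p.1 ∧ p.1 ≤ (L₀ : ℤ) ∧ |p.2| ≤ p.1} → ℂ :=
    fun p => (-1 : ℂ) ^ (p.1.2) * conj (α (σ p))
  have hne : (-1 : ℂ) ≠ 0 := by norm_num
  have key : M.mulVec β = b := by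
    funext p
    have hbp : b p = (-1:ℂ)^(p.1.2) * conj (b (σ p)) := hb p (σ p) rfl
    rw [hbp, ← hα]
    show ∑ q, M p q * β q = (-1:ℂ)^(p.1.2) * conj (∑ q, M (σ p) q * α q)
    rw [map_sum, Finset.mul_sum]
    refine Fintype.sum_bijective σ hσbij _ _ (fun q => ?_)
    have hM : M (σ p) (σ q) = (-1:ℂ)^(p.1.2 + q.1.2) * conj (M p q) := by
      have := hMsym p (σ p) (σ q) q rfl (by simp [σ])
      simpa [σ, sub_neg_eq_add] using this
    have hconjM : conj (M (σ p) (σ q)) = (-1:ℂ)^(p.1.2 + q.1.2) * M p q := by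
      rw [hM, _root_.map_mul, map_zpow₀, Complex.conj_conj]
      norm_num
    have hpow : (-1:ℂ)^(p.1.2) * (-1:ℂ)^(p.1.2 + q.1.2) = (-1:ℂ)^(q.1.2) := by
      rw [← zpow_add₀ hne,
        show p.1.2 + (p.1.2 + q.1.2) = 2 * p.1.2 + q.1.2 from by ring,
        zpow_add₀ hne, _root_.zpow_mul]
      norm_num
    calc M p q * β q = M p q * ((-1:ℂ)^(q.1.2) * conj (α (σ q))) := rfl
      _ = ((-1:ℂ)^(p.1.2) * (-1:ℂ)^(p.1.2 + q.1.2)) * (M p q * conj (α (σ q))) := by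
          rw [hpow]; ring
      _ = (-1:ℂ)^(p.1.2) * (((-1:ℂ)^(p.1.2 + q.1.2) * M p q) * conj (α (σ q))) := by ring
      _ = (-1:ℂ)^(p.1.2) * conj (M (σ p) (σ q) * α (σ q)) := by
          rw [_root_.map_mul, hconjM]
  have hαβ : α = β := by
    have hdet : IsUnit M.det := (Matrix.isUnit_iff_isUnit_det M).mp hMunit
    have h1 : M.mulVec α = M.mulVec β := by rw [hα, key]
    have h2 : M⁻¹.mulVec (M.mulVec α) = M⁻¹.mulVec (M.mulVec β) := by rw [h1]
    simpa [Matrix.mulVec_mulVec, Matrix.nonsing_inv_mul M hdet] using h2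
  intro p p' hp'
  have hps : p' = σ p := Subtype.ext hp'
  rw [hps]
  calc α p = β p := by rw [hαβ]
    _ = (-1:ℂ)^(p.1.2) * conj (α (σ p)) := rfl
end

section
/- Let J₀, L₀ ∈ ℕ, and let I_J := {(j, μ) ∈ ℤ × ℤ : 0 ≤ j ≤ J₀, |μ| ≤ j} and I_L := {(ℓ, m) ∈ ℤ × ℤ : 0 ≤ ℓ ≤ L₀, |m| ≤ ℓ}. Let E : Matrix I_J I_L ℂ satisfy E (j,μ) (ℓ,−m) = (−1)^{m−μ} · conj(E (j,−μ) (ℓ,m)) for all admissible indices; let Γ : Matrix I_J I_J ℂ be diagonal with real entries depending only on the first index, Γ (j,μ) (j,μ) = γ j with γ : ℤ → ℝ; and let Σ : Matrix I_L I_L ℂ be diagonal with real entries depending only on the first index, Σ (ℓ,m) (ℓ,m) = σ ℓ with σ : ℤ → ℝ. Then the matrix M := Eᴴ * Γ * E + Σ satisfies M (ℓ,−m) (ℓ',m') = (−1)^{m−m'} · conj(M (ℓ,m) (ℓ',−m')) for all (ℓ,m), (ℓ',m') ∈ I_L. -/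
open Matrix ComplexConjugate

private lemma negone_even (a b : ℤ) (h : ∃ c : ℤ, a = b + 2*c) :
    ((-1 : ℂ)) ^ a = (-1 : ℂ) ^ b := by
  obtain ⟨c, rfl⟩ := h
  rw [zpow_add₀ (by norm_num : (-1:ℂ) ≠ 0), _root_.zpow_mul]
  norm_num

private def flipE (N : ℕ) :
    {p : ℤ × ℤ // 0 ≤ p.1 ∧ p.1 ≤ (N : ℤ) ∧ |p.2| ≤ p.1} ≃
    {p : ℤ × ℤ // 0 ≤ p.1 ∧ p.1 ≤ (N : ℤ) ∧ |p.2| ≤ p.1} where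
  toFun x := ⟨(x.1.1, -x.1.2), x.2.1, x.2.2.1, by simpa using x.2.2.2⟩
  invFun x := ⟨(x.1.1, -x.1.2), x.2.1, x.2.2.1, by simpa using x.2.2.2⟩
  left_inv x := by ext <;> simp
  right_inv x := by ext <;> simp

/-- Second step in the proof of the Proposition at the end of Section 4: if `E` satisfies
the symmetry `E (j,μ) (ℓ,−m) = (−1)^{m−μ} conj (E (j,−μ) (ℓ,m))`, and `Γ`, `Σ` are
diagonal with real entries `γ j`, `σ ℓ` depending only on the first index, then
`M := Eᴴ Γ E + Σ` satisfies
`M (ℓ,−m) (ℓ',m') = (−1)^{m−m'} conj (M (ℓ,m) (ℓ',−m'))`. -/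
theorem stmt_15 (J₀ L₀ : ℕ)
    [Fintype {p : ℤ × ℤ // 0 ≤ p.1 ∧ p.1 ≤ (J₀ : ℤ) ∧ |p.2| ≤ p.1}]
    (E : Matrix {p : ℤ × ℤ // 0 ≤ p.1 ∧ p.1 ≤ (J₀ : ℤ) ∧ |p.2| ≤ p.1}
                {p : ℤ × ℤ // 0 ≤ p.1 ∧ p.1 ≤ (L₀ : ℤ) ∧ |p.2| ≤ p.1} ℂ)
    (hEsym : ∀ p p' q q', p'.1 = (p.1.1, -p.1.2) → q'.1 = (q.1.1, -q.1.2) →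
      E p q' = (-1 : ℂ) ^ (q.1.2 - p.1.2) * conj (E p' q))
    (Γ : Matrix {p : ℤ × ℤ // 0 ≤ p.1 ∧ p.1 ≤ (J₀ : ℤ) ∧ |p.2| ≤ p.1}
                {p : ℤ × ℤ // 0 ≤ p.1 ∧ p.1 ≤ (J₀ : ℤ) ∧ |p.2| ≤ p.1} ℂ)
    (γ : ℤ → ℝ)
    (hΓ : Γ = Matrix.diagonal (fun p => ((γ p.1.1 : ℝ) : ℂ)))
    (Sig : Matrix {p : ℤ × ℤ // 0 ≤ p.1 ∧ p.1 ≤ (L₀ : ℤ) ∧ |p.2| ≤ p.1}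
                  {p : ℤ × ℤ // 0 ≤ p.1 ∧ p.1 ≤ (L₀ : ℤ) ∧ |p.2| ≤ p.1} ℂ)
    (σ : ℤ → ℝ)
    (hSig : Sig = Matrix.diagonal (fun p => ((σ p.1.1 : ℝ) : ℂ))) :
    ∀ p p' q q', p'.1 = (p.1.1, -p.1.2) → q'.1 = (q.1.1, -q.1.2) →
      (Eᴴ * Γ * E + Sig) p' q
        = (-1 : ℂ) ^ (p.1.2 - q.1.2) * conj ((Eᴴ * Γ * E + Sig) p q') := by
  intro p p' q q' hp hq
  have hne : (-1 : ℂ) ≠ 0 := by norm_num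
  have hM : ∀ a b, (Eᴴ * Γ * E) a b
      = ∑ k, conj (E k a) * ((γ k.1.1 : ℝ) : ℂ) * E k b := by
    intro a b
    rw [hΓ, Matrix.mul_assoc, Matrix.mul_apply]
    congr 1; ext k
    rw [Matrix.diagonal_mul, conjTranspose_apply, mul_assoc]
    rfl
  rw [Matrix.add_apply, Matrix.add_apply, hM, hM, map_add, mul_add, map_sum]
  congr 1
  · -- sum part
    rw [Finset.mul_sum, ← Equiv.sum_comp (flipE J₀)]
    apply Finset.sum_congr rfl
    intro k _
    set fk := flipE J₀ k with hfk
    have hfk1 : fk.1 = (k.1.1, -k.1.2) := rfl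
    have hfk2 : (fk.1).2 = -(k.1).2 := rfl
    have hfkg : (fk.1).1 = (k.1).1 := rfl
    have h1 : E fk p' = (-1:ℂ) ^ (p.1.2 - fk.1.2) * conj (E k p) := by
      refine hEsym fk k p p' ?_ hp
      ext <;> simp [hfk1]
    have h2 : E k q' = (-1:ℂ) ^ (q.1.2 - k.1.2) * conj (E fk q) :=
      hEsym k fk q q' hfk1 hq
    have h1' : conj (E fk p') = (-1:ℂ) ^ (p.1.2 - fk.1.2) * E k p := by
      rw [h1, _root_.map_mul, map_zpow₀, Complex.conj_conj]
      norm_num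
    have h2' : conj (E k q') = (-1:ℂ) ^ (q.1.2 - k.1.2) * E fk q := by
      rw [h2, _root_.map_mul, map_zpow₀, Complex.conj_conj]
      norm_num
    have hexp : (-1:ℂ) ^ (p.1.2 - q.1.2) * (-1:ℂ) ^ (q.1.2 - k.1.2)
        = (-1:ℂ) ^ (p.1.2 - fk.1.2) := by
      rw [← zpow_add₀ hne, hfk2,
        negone_even (p.1.2 - q.1.2 + (q.1.2 - (k.1).2)) (p.1.2 - -(k.1).2)
          ⟨-(k.1).2, by ring⟩]
    rw [h1', _root_.map_mul, _root_.map_mul, Complex.conj_conj,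
      Complex.conj_ofReal, h2', ← hexp, hfkg]
    ring
  · -- diagonal part
    rw [hSig]
    by_cases h : p = q'
    · have hp'q : p' = q := by
        apply Subtype.ext
        rw [hp, h, hq]
        simp
      rw [hp'q, Matrix.diagonal_apply_eq, h, Matrix.diagonal_apply_eq,
        Complex.conj_ofReal, hq]
      have he : ((-1:ℂ)) ^ (-(q.1).2 - (q.1).2) = 1 := by
        rw [negone_even _ 0 ⟨-(q.1).2, by ring⟩]
        exact zpow_zero _
      simp [he]
    · have hp'q : p' ≠ q := by
        intro hc
        apply h
        apply Subtype.ext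
        rw [hq, ← hc, hp]
        simp
      rw [Matrix.diagonal_apply_ne _ hp'q, Matrix.diagonal_apply_ne _ h]
      simp
end
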